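/- Under the same assumptions, the pressure error of the ideal multiscale method satisfies ‖p − p_H‖_{L²(Ω)} ≤ C(H·‖f − P_H f‖_{L²(Ω)} + ‖p − P_H p‖_{L²(Ω)}), where C depends on α, β, and the inf-sup constant of the pair (V^ms, Q_H ∩ L²₀(Ω)), but not on H or the oscillations of A. -/

import Mathlib

/-!
Split `‖p - p_H‖ ≤ ‖p - P_H p‖ + ‖P_H p - p_H‖` and let `(u', p')` be the exact solution for the
data `P_H f`. The multiscale velocity and the corrected interpolant `(1 - 𝒞) π u'` both lie in
`V^ms` and have divergence `-P_H f`, so their difference is energy-orthogonal to itself, while `u'`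
differs from that interpolant by a fine-scale function, which is energy-orthogonal to `V^ms`.
Hence `(div v, P_H p - p_H) = -a(u - u', v)` on `V^ms`, and the inf-sup condition bounds
`‖P_H p - p_H‖` by the flux error `‖A⁻¹(u - u')‖`. That flux is the weak gradient of `p - p'`,
which `P_H` approximates to order `H`; as `f - P_H f ⊥ Q_H`, the energy identity gives
`‖A⁻¹(u - u')‖² ≤ β (f - P_H f, p - p') ≲ H ‖f - P_H f‖ ‖A⁻¹(u - u')‖`.
-/

open scoped RealInnerProductSpace

section InnerProductSpace

variable {E : Type*} [NormedAddCommGroup E] [InnerProductSpace ℝ E]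

theorem eq_neg_of_forall_inner_eq_neg_inner {K : Submodule ℝ E} {x y : E} (hxy : x + y ∈ K)
    (h : ∀ q ∈ K, ⟪x, q⟫ = -⟪y, q⟫) : x = -y := by
  have hzero : ⟪x + y, x + y⟫ = 0 := by rw [inner_add_left, h _ hxy]; ring
  exact eq_neg_of_add_eq_zero_left (inner_self_eq_zero.mp hzero)

theorem Submodule.inner_sub_starProjection_le (K : Submodule ℝ E) [K.HasOrthogonalProjection]
    (x y : E) :
    ⟪x - K.starProjection x, y⟫ ≤ ‖x - K.starProjection x‖ * ‖y - K.starProjection y‖ := by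
  have hy : ⟪x - K.starProjection x, y⟫ = ⟪x - K.starProjection x, y - K.starProjection y⟫ := by
    rw [inner_sub_right, real_inner_comm, K.starProjection_inner_eq_zero _ _
      (K.starProjection_apply_mem y), sub_zero]
  exact hy ▸ real_inner_le_norm _ _

theorem ContinuousLinearMap.IsPositive.sq_norm_apply_le {T : E →L[ℝ] E} (hT : T.IsPositive)
    {β : ℝ} (hβ : 0 ≤ β) (hupp : ∀ x, ⟪T x, x⟫ ≤ β * ‖x‖ ^ 2) (x : E) :
    ‖T x‖ ^ 2 ≤ β * ⟪T x, x⟫ := by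
  have hpos : ∀ y, 0 ≤ ⟪T y, y⟫ := hT.inner_nonneg_left
  have hcs := LinearMap.BilinForm.apply_mul_apply_le_of_forall_zero_le
    ((innerₗ E).comp (T : E →ₗ[ℝ] E)) hpos x (T x)
  simp only [LinearMap.comp_apply, innerₗ_apply_apply, ContinuousLinearMap.coe_coe] at hcs
  rw [hT.inner_left_eq_inner_right (T x) x, real_inner_self_eq_norm_sq] at hcs
  rcases (norm_nonneg (T x)).eq_or_lt with h0 | hpos'
  · rw [← h0]; simpa using mul_nonneg hβ (hpos x)
  · have := hcs.trans (mul_le_mul_of_nonneg_left (hupp (T x)) (hpos x))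
    nlinarith [pow_pos hpos' 2]

theorem eq_zero_of_inner_apply_self_eq_zero {T : E →L[ℝ] E} {α : ℝ} (hα : 0 < α)
    (hlow : ∀ w, α * ‖w‖ ^ 2 ≤ ⟪T w, w⟫) {w : E} (hw : ⟪T w, w⟫ = 0) : w = 0 := by
  have := hlow w
  rw [hw] at this
  exact norm_eq_zero.mp (pow_eq_zero_iff two_ne_zero |>.mp
    (le_antisymm (nonpos_of_mul_nonpos_right this hα) (sq_nonneg _)))

end InnerProductSpace

section MixedProblem

variable {Hdiv L2v S : Type*}
  [NormedAddCommGroup Hdiv] [InnerProductSpace ℝ Hdiv]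
  [NormedAddCommGroup L2v] [InnerProductSpace ℝ L2v]
  [NormedAddCommGroup S] [InnerProductSpace ℝ S]
  {ι : Hdiv →L[ℝ] L2v} {D : Hdiv →L[ℝ] S} {Ainv : L2v →L[ℝ] L2v}

def multiscaleSpace (π 𝒞 : Hdiv →L[ℝ] Hdiv) : Submodule ℝ Hdiv :=
  Submodule.map ((ContinuousLinearMap.id ℝ Hdiv - 𝒞) : Hdiv →ₗ[ℝ] Hdiv)
    (LinearMap.range (π : Hdiv →ₗ[ℝ] Hdiv))

def fineScaleSpace (π : Hdiv →L[ℝ] Hdiv) (D : Hdiv →L[ℝ] S) : Submodule ℝ Hdiv :=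
  LinearMap.ker (π : Hdiv →ₗ[ℝ] Hdiv) ⊓ LinearMap.ker (D : Hdiv →ₗ[ℝ] S)

theorem inner_multiscaleSpace_fineScaleSpace_eq_zero {π 𝒞 : Hdiv →L[ℝ] Hdiv}
    (h𝒞eq : ∀ v, ∀ w ∈ fineScaleSpace π D, ⟪Ainv (ι (𝒞 v)), ι w⟫ = ⟪Ainv (ι v), ι w⟫)
    {v w : Hdiv} (hv : v ∈ multiscaleSpace π 𝒞) (hw : w ∈ fineScaleSpace π D) :
    ⟪Ainv (ι v), ι w⟫ = 0 := by
  obtain ⟨y, -, rfl⟩ := hv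
  change ⟪Ainv (ι (y - 𝒞 y)), ι w⟫ = 0
  rw [map_sub, map_sub, inner_sub_left, h𝒞eq y w hw, sub_self]

theorem sub_mem_fineScaleSpace {π 𝒞 : Hdiv →L[ℝ] Hdiv} {QH : Submodule ℝ S}
    [QH.HasOrthogonalProjection] (hπproj : ∀ v, π (π v) = π v)
    (hcomm : ∀ v, D (π v) = QH.starProjection (D v))
    (h𝒞mem : ∀ v, 𝒞 v ∈ fineScaleSpace π D) {x : Hdiv} (hx : D x ∈ QH) :
    π x - 𝒞 (π x) - x ∈ fineScaleSpace π D := by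
  obtain ⟨hπ𝒞, hD𝒞⟩ : π (𝒞 (π x)) = 0 ∧ D (𝒞 (π x)) = 0 := h𝒞mem (π x)
  refine ⟨?_, ?_⟩
  · change π (π x - 𝒞 (π x) - x) = 0
    rw [map_sub, map_sub, hπproj, hπ𝒞, sub_zero, sub_self]
  · change D (π x - 𝒞 (π x) - x) = 0
    rw [map_sub, map_sub, hcomm, hD𝒞, sub_zero,
      QH.starProjection_eq_self_iff.mpr hx, sub_self]

theorem norm_flux_sub_le {QH L0 : Submodule ℝ S} [QH.HasOrthogonalProjection]
    (hA : Ainv.IsPositive) {β c : ℝ} (hβ : 0 ≤ β) (hc : 0 ≤ c)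
    (hupp : ∀ w, ⟪Ainv w, w⟫ ≤ β * ‖w‖ ^ 2)
    (happrox : ∀ (q : S) (g : L2v), (∀ v, ⟪D v, q⟫ = -⟪g, ι v⟫) →
      ‖q - QH.starProjection q‖ ≤ c * ‖g‖)
    {f p p' : S} {u u' : Hdiv} (hp : p ∈ L0) (hp' : p' ∈ L0)
    (h1 : ∀ v, ⟪Ainv (ι u), ι v⟫ + ⟪D v, p⟫ = 0) (h2 : ∀ q ∈ L0, ⟪D u, q⟫ = -⟪f, q⟫)
    (h1' : ∀ v, ⟪Ainv (ι u'), ι v⟫ + ⟪D v, p'⟫ = 0)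
    (h2' : ∀ q ∈ L0, ⟪D u', q⟫ = -⟪QH.starProjection f, q⟫) :
    ‖Ainv (ι (u - u'))‖ ≤ β * (c * ‖f - QH.starProjection f‖) := by
  set g := Ainv (ι (u - u'))
  have hweak : ∀ v, ⟪D v, p - p'⟫ = -⟪g, ι v⟫ := fun v => by
    have := h1 v; have := h1' v
    simp only [g, map_sub, inner_sub_left, inner_sub_right]
    linarith
  have henergy : ⟪g, ι (u - u')⟫ = ⟪f - QH.starProjection f, p - p'⟫ := by
    have hq := L0.sub_mem hp hp'
    have hdiv := hweak (u - u')
    rw [map_sub, inner_sub_left, h2 _ hq, h2' _ hq] at hdiv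
    rw [inner_sub_left]
    linarith
  have hgg : ⟪g, ι (u - u')⟫ ≤ c * ‖f - QH.starProjection f‖ * ‖g‖ := by
    rw [henergy]
    calc _ ≤ ‖f - QH.starProjection f‖ * ‖p - p' - QH.starProjection (p - p')‖ :=
          QH.inner_sub_starProjection_le f (p - p')
      _ ≤ ‖f - QH.starProjection f‖ * (c * ‖g‖) := by gcongr; exact happrox _ _ hweak
      _ = c * ‖f - QH.starProjection f‖ * ‖g‖ := by ring
  -- `‖g‖² ≤ β ⟪g, ι (u - u')⟫ ≤ β c ‖f - P_H f‖ ‖g‖`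
  have hsq := hA.sq_norm_apply_le hβ hupp (ι (u - u'))
  rcases (norm_nonneg g).eq_or_lt with h0 | hg
  · rw [← h0]; positivity
  · nlinarith [mul_le_mul_of_nonneg_left hgg hβ]
theorem inner_multiscale_solution_eq_of_div_eq {π 𝒞 : Hdiv →L[ℝ] Hdiv} {QH : Submodule ℝ S}
    [QH.HasOrthogonalProjection] (hAsym : ∀ w z, ⟪Ainv w, z⟫ = ⟪w, Ainv z⟫) {α : ℝ}
    (hα : 0 < α) (hlow : ∀ w, α * ‖w‖ ^ 2 ≤ ⟪Ainv w, w⟫) (hπproj : ∀ v, π (π v) = π v)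
    (hcomm : ∀ v, D (π v) = QH.starProjection (D v)) (h𝒞mem : ∀ v, 𝒞 v ∈ fineScaleSpace π D)
    (h𝒞eq : ∀ v, ∀ w ∈ fineScaleSpace π D, ⟪Ainv (ι (𝒞 v)), ι w⟫ = ⟪Ainv (ι v), ι w⟫)
    {u uH : Hdiv} {p pH : S} (h1 : ∀ v, ⟪Ainv (ι u), ι v⟫ + ⟪D v, p⟫ = 0)
    (huH : uH ∈ multiscaleSpace π 𝒞) (hdivH : D uH ∈ QH)
    (h1H : ∀ v ∈ multiscaleSpace π 𝒞, ⟪Ainv (ι uH), ι v⟫ + ⟪D v, pH⟫ = 0)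
    (hdiv : D uH = D u) {v : Hdiv} (hv : v ∈ multiscaleSpace π 𝒞) :
    ⟪Ainv (ι uH), ι v⟫ = ⟪Ainv (ι u), ι v⟫ := by
  set uI := π u - 𝒞 (π u)
  have huI : uI ∈ multiscaleSpace π 𝒞 := ⟨π u, LinearMap.mem_range_self _ u, rfl⟩
  have hfine : uI - u ∈ fineScaleSpace π D :=
    sub_mem_fineScaleSpace hπproj hcomm h𝒞mem (hdiv ▸ hdivH)
  have horth : ∀ w ∈ multiscaleSpace π 𝒞, ⟪Ainv (ι (uI - u)), ι w⟫ = 0 := fun w hw => by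
    rw [hAsym, real_inner_comm]; exact inner_multiscaleSpace_fineScaleSpace_eq_zero h𝒞eq hw hfine
  set e := uH - uI
  have he : e ∈ multiscaleSpace π 𝒞 := Submodule.sub_mem _ huH huI
  have hDe : D e = 0 := by
    have hDuI : D uI = D u := sub_eq_zero.mp (by rw [← map_sub]; exact hfine.2)
    rw [map_sub, hdiv, hDuI, sub_self]
  have hee : ⟪Ainv (ι e), ι e⟫ = 0 := by
    have h1He := h1H e he
    have h1e := h1 e
    rw [hDe, inner_zero_left, add_zero] at h1He h1e
    calc ⟪Ainv (ι e), ι e⟫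
        = ⟪Ainv (ι uH), ι e⟫ - ⟪Ainv (ι u), ι e⟫ - ⟪Ainv (ι (uI - u)), ι e⟫ := by
          simp only [e, map_sub, inner_sub_left]; ring
      _ = 0 := by rw [h1He, h1e, horth e he]; ring
  have hιe : ι uH = ι uI := sub_eq_zero.mp (by
    simpa [e] using eq_zero_of_inner_apply_self_eq_zero hα hlow hee)
  calc ⟪Ainv (ι uH), ι v⟫ = ⟪Ainv (ι uI), ι v⟫ := by rw [hιe]
    _ = ⟪Ainv (ι u), ι v⟫ := by
      rw [← sub_eq_zero, ← inner_sub_left, ← map_sub, ← map_sub]; exact horth v hv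

theorem inner_div_starProjection_sub {V : Submodule ℝ Hdiv} {QH : Submodule ℝ S}
    [QH.HasOrthogonalProjection] (hdivV : ∀ v ∈ V, D v ∈ QH) {u uH : Hdiv} {p pH : S}
    (h1 : ∀ v, ⟪Ainv (ι u), ι v⟫ + ⟪D v, p⟫ = 0)
    (h1H : ∀ v ∈ V, ⟪Ainv (ι uH), ι v⟫ + ⟪D v, pH⟫ = 0) {v : Hdiv} (hv : v ∈ V) :
    ⟪D v, QH.starProjection p - pH⟫ = ⟪Ainv (ι uH), ι v⟫ - ⟪Ainv (ι u), ι v⟫ := by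
  have hP : ⟪D v, QH.starProjection p⟫ = ⟪D v, p⟫ := by
    rw [← QH.inner_starProjection_left_eq_right, QH.starProjection_eq_self_iff.mpr (hdivV v hv)]
  rw [inner_sub_right, hP]
  linarith [h1 v, h1H v hv]

theorem mul_norm_le_of_inf_sup {V : Submodule ℝ Hdiv} {Q : Submodule ℝ S} {ρ c : ℝ}
    (hinfsup : ∀ q ∈ Q, q ≠ 0 → ∃ v ∈ V, v ≠ 0 ∧ ρ * ‖q‖ * ‖v‖ ≤ ⟪D v, q⟫)
    (hc : 0 ≤ c) {q : S} (hq : q ∈ Q) (hbound : ∀ v ∈ V, ⟪D v, q⟫ ≤ c * ‖v‖) :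
    ρ * ‖q‖ ≤ c := by
  rcases eq_or_ne q 0 with rfl | hq0
  · simpa using hc
  obtain ⟨v, hvV, hv0, hv⟩ := hinfsup q hq hq0
  exact le_of_mul_le_mul_right (hv.trans (hbound v hvV)) (norm_pos_iff.mpr hv0)

end MixedProblem

theorem ideal_pressure_error_estimate_general
    {Hdiv L2v S H1 : Type*}
    [NormedAddCommGroup Hdiv] [InnerProductSpace ℝ Hdiv]
    [NormedAddCommGroup L2v] [InnerProductSpace ℝ L2v]
    [NormedAddCommGroup S] [InnerProductSpace ℝ S]
    [NormedAddCommGroup H1] [InnerProductSpace ℝ H1]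
    (ι : Hdiv →L[ℝ] L2v) (D : Hdiv →L[ℝ] S)
    (hι : ∀ v : Hdiv, ‖ι v‖ ≤ ‖v‖)
    (G : H1 →L[ℝ] L2v) (j : H1 →L[ℝ] S)
    (Ainv : L2v →L[ℝ] L2v) (hAsym : ∀ w z : L2v, ⟪Ainv w, z⟫ = ⟪w, Ainv z⟫)
    (α β : ℝ) (hα : 0 < α) (hβ : 0 < β)
    (hlow : ∀ w : L2v, α * ‖w‖ ^ 2 ≤ ⟪Ainv w, w⟫)
    (hupp : ∀ w : L2v, ⟪Ainv w, w⟫ ≤ β * ‖w‖ ^ 2)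
    (QH L0 : Submodule ℝ S) [Submodule.HasOrthogonalProjection QH]
    (hPL0 : ∀ q ∈ L0, (Submodule.orthogonalProjectionOnto QH q : S) ∈ L0)
    (Hm C_P : ℝ) (hHm : 0 < Hm) (hCP : 0 ≤ C_P)
    (happrox : ∀ r : H1, ‖j r - (Submodule.orthogonalProjectionOnto QH (j r) : S)‖ ≤ C_P * Hm * ‖G r‖)
    (hGradChar : ∀ (pp : S) (g : L2v),
      (∀ v : Hdiv, ⟪D v, pp⟫ = -⟪g, ι v⟫) → ∃ pt : H1, j pt = pp ∧ G pt = g)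
    (π 𝒞 : Hdiv →L[ℝ] Hdiv) (hπproj : ∀ v : Hdiv, π (π v) = π v)
    (hcomm : ∀ v : Hdiv, D (π v) = (Submodule.orthogonalProjectionOnto QH (D v) : S))
    (h𝒞mem : ∀ v : Hdiv, 𝒞 v ∈ LinearMap.ker (π : Hdiv →ₗ[ℝ] Hdiv) ⊓ LinearMap.ker (D : Hdiv →ₗ[ℝ] S))
    (h𝒞eq : ∀ v : Hdiv, ∀ w ∈ LinearMap.ker (π : Hdiv →ₗ[ℝ] Hdiv) ⊓ LinearMap.ker (D : Hdiv →ₗ[ℝ] S),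
      ⟪Ainv (ι (𝒞 v)), ι w⟫ = ⟪Ainv (ι v), ι w⟫)
    (hDL0 : ∀ v : Hdiv, D v ∈ L0)
    -- inf-sup stability on the multiscale pair (V^ms, Q_H ∩ L²₀)
    (ρms : ℝ) (hρms : 0 < ρms)
    (hinfsup : ∀ qH ∈ QH ⊓ L0, qH ≠ 0 →
      ∃ v ∈ Submodule.map ((ContinuousLinearMap.id ℝ Hdiv - 𝒞) : Hdiv →ₗ[ℝ] Hdiv)
        (LinearMap.range (π : Hdiv →ₗ[ℝ] Hdiv)), v ≠ 0 ∧ ρms * ‖qH‖ * ‖v‖ ≤ ⟪D v, qH⟫)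
    (f : S) (hf : f ∈ L0)
    (u : Hdiv) (p : S) (hp : p ∈ L0)
    (h1 : ∀ v : Hdiv, ⟪Ainv (ι u), ι v⟫ + ⟪D v, p⟫ = 0)
    (h2 : ∀ q ∈ L0, ⟪D u, q⟫ = -⟪f, q⟫)
    (uPf : Hdiv) (pPf : S) (hpPf : pPf ∈ L0)
    (h1Pf : ∀ v : Hdiv, ⟪Ainv (ι uPf), ι v⟫ + ⟪D v, pPf⟫ = 0)
    (h2Pf : ∀ q ∈ L0, ⟪D uPf, q⟫ = -⟪(Submodule.orthogonalProjectionOnto QH f : S), q⟫)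
    (uHms : Hdiv) (pH : S)
    (huHms : uHms ∈ Submodule.map ((ContinuousLinearMap.id ℝ Hdiv - 𝒞) : Hdiv →ₗ[ℝ] Hdiv)
      (LinearMap.range (π : Hdiv →ₗ[ℝ] Hdiv)))
    (hpH : pH ∈ QH ⊓ L0)
    (hdivV : ∀ v ∈ Submodule.map ((ContinuousLinearMap.id ℝ Hdiv - 𝒞) : Hdiv →ₗ[ℝ] Hdiv)
      (LinearMap.range (π : Hdiv →ₗ[ℝ] Hdiv)), D v ∈ QH)
    (hd1 : ∀ v ∈ Submodule.map ((ContinuousLinearMap.id ℝ Hdiv - 𝒞) : Hdiv →ₗ[ℝ] Hdiv)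
      (LinearMap.range (π : Hdiv →ₗ[ℝ] Hdiv)), ⟪Ainv (ι uHms), ι v⟫ + ⟪D v, pH⟫ = 0)
    (hd2 : ∀ qH ∈ QH, ⟪D uHms, qH⟫ = -⟪f, qH⟫) :
    ‖p - pH‖ ≤ (1 + ρms⁻¹ * (β * C_P + 1)) *
      (Hm * ‖f - (Submodule.orthogonalProjectionOnto QH f : S)‖ +
        ‖p - (Submodule.orthogonalProjectionOnto QH p : S)‖) := by
  simp only [Submodule.coe_orthogonalProjectionOnto_apply]
  set Pf := QH.starProjection f
  set Pp := QH.starProjection p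
  have hA : Ainv.IsPositive := ⟨hAsym, fun w => by
    simpa [ContinuousLinearMap.reApplyInnerSelf_apply] using (hlow w).trans' (by positivity)⟩
  have hflux : ‖Ainv (ι (u - uPf))‖ ≤ β * (C_P * Hm * ‖f - Pf‖) :=
    norm_flux_sub_le hA hβ.le (by positivity) hupp
      (fun q g hq => by obtain ⟨r, rfl, rfl⟩ := hGradChar q g hq; exact happrox r)
      hp hpPf h1 h2 h1Pf h2Pf
  have hdivPf : D uPf = -Pf :=
    eq_neg_of_forall_inner_eq_neg_inner (L0.add_mem (hDL0 uPf) (hPL0 f hf)) h2Pf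
  have hdivHms : D uHms = -Pf := eq_neg_of_forall_inner_eq_neg_inner
    (QH.add_mem (hdivV uHms huHms) (QH.starProjection_apply_mem f)) fun q hq => by
      rw [hd2 q hq, ← QH.inner_orthogonalProjectionOnto_eq_of_mem_right ⟨q, hq⟩ f]; rfl
  have hgal : ∀ v ∈ multiscaleSpace π 𝒞, ⟪Ainv (ι uHms), ι v⟫ = ⟪Ainv (ι uPf), ι v⟫ :=
    fun v => inner_multiscale_solution_eq_of_div_eq hAsym hα hlow hπproj hcomm h𝒞mem h𝒞eq h1Pf
      huHms (hdivV uHms huHms) hd1 (hdivHms.trans hdivPf.symm)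
  have hdisc : ρms * ‖Pp - pH‖ ≤ β * (C_P * Hm * ‖f - Pf‖) := by
    refine mul_norm_le_of_inf_sup hinfsup (by positivity)
      (Submodule.sub_mem _ ⟨QH.starProjection_apply_mem p, hPL0 p hp⟩ hpH) fun v hv => ?_
    calc ⟪D v, Pp - pH⟫ = -⟪Ainv (ι (u - uPf)), ι v⟫ := by
          rw [inner_div_starProjection_sub hdivV h1 hd1 hv, hgal v hv, map_sub, map_sub,
            inner_sub_left, neg_sub]
      _ ≤ ‖Ainv (ι (u - uPf))‖ * ‖ι v‖ := (neg_le_abs _).trans (abs_real_inner_le_norm _ _)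
      _ ≤ β * (C_P * Hm * ‖f - Pf‖) * ‖v‖ := by gcongr; exact hι v
  have hPp : ‖Pp - pH‖ ≤ ρms⁻¹ * (β * (C_P * Hm * ‖f - Pf‖)) := (le_inv_mul_iff₀ hρms).mpr hdisc
  have hρ : 0 ≤ ρms⁻¹ := by positivity
  have hfPf : 0 ≤ Hm * ‖f - Pf‖ := by positivity
  calc ‖p - pH‖ ≤ ‖p - Pp‖ + ‖Pp - pH‖ := norm_sub_le_norm_sub_add_norm_sub _ _ _
    _ ≤ _ := by
      linarith [mul_nonneg hρ hfPf, mul_nonneg (mul_nonneg hρ (by positivity : 0 ≤ β * C_P + 1))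
        (norm_nonneg (p - Pp))]

/-- **Pressure error estimate for the ideal multiscale method:**
`‖p − p_H‖ ≤ C(H·‖f − P_H f‖ + ‖p − P_H p‖)` with explicit constant
`C = 1 + ρms⁻¹(β·C_P + 1)` depending only on the spectral bounds `α, β` of `A⁻¹`,
the inf-sup constant `ρms` of the pair `(V^ms, Q_H ∩ L²₀)` and the projection
constant `C_P`, but not on the mesh size `H` or the oscillations of `A`.
Abstract setting as in the energy-norm error estimate, together with the inf-sup
stability of `b(v,q) = (div v, q)` on the multiscale pair and the `H(div)`-norm
bounds `‖ι v‖ ≤ ‖v‖`, `‖D v‖ ≤ ‖v‖`. -/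
theorem ideal_pressure_error_estimate
    {Hdiv L2v S H1 : Type*}
    [NormedAddCommGroup Hdiv] [InnerProductSpace ℝ Hdiv] [CompleteSpace Hdiv]
    [NormedAddCommGroup L2v] [InnerProductSpace ℝ L2v] [CompleteSpace L2v]
    [NormedAddCommGroup S] [InnerProductSpace ℝ S] [CompleteSpace S]
    [NormedAddCommGroup H1] [InnerProductSpace ℝ H1] [CompleteSpace H1]
    (ι : Hdiv →L[ℝ] L2v) (D : Hdiv →L[ℝ] S)
    (hι : ∀ v : Hdiv, ‖ι v‖ ≤ ‖v‖) (hD : ∀ v : Hdiv, ‖D v‖ ≤ ‖v‖)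
    (G : H1 →L[ℝ] L2v) (j : H1 →L[ℝ] S)
    (Ainv : L2v →L[ℝ] L2v) (hAsym : ∀ w z : L2v, ⟪Ainv w, z⟫ = ⟪w, Ainv z⟫)
    (α β : ℝ) (hα : 0 < α) (hβ : 0 < β)
    (hlow : ∀ w : L2v, α * ‖w‖ ^ 2 ≤ ⟪Ainv w, w⟫)
    (hupp : ∀ w : L2v, ⟪Ainv w, w⟫ ≤ β * ‖w‖ ^ 2)
    (QH L0 : Submodule ℝ S) [Submodule.HasOrthogonalProjection QH]
    (hPL0 : ∀ q ∈ L0, (Submodule.orthogonalProjectionOnto QH q : S) ∈ L0)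
    (Hm C_P : ℝ) (hHm : 0 < Hm) (hCP : 0 ≤ C_P)
    (happrox : ∀ r : H1, ‖j r - (Submodule.orthogonalProjectionOnto QH (j r) : S)‖ ≤ C_P * Hm * ‖G r‖)
    (hGradChar : ∀ (pp : S) (g : L2v),
      (∀ v : Hdiv, ⟪D v, pp⟫ = -⟪g, ι v⟫) → ∃ pt : H1, j pt = pp ∧ G pt = g)
    (π 𝒞 : Hdiv →L[ℝ] Hdiv) (hπproj : ∀ v : Hdiv, π (π v) = π v)
    (hcomm : ∀ v : Hdiv, D (π v) = (Submodule.orthogonalProjectionOnto QH (D v) : S))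
    (h𝒞mem : ∀ v : Hdiv, 𝒞 v ∈ LinearMap.ker (π : Hdiv →ₗ[ℝ] Hdiv) ⊓ LinearMap.ker (D : Hdiv →ₗ[ℝ] S))
    (h𝒞eq : ∀ v : Hdiv, ∀ w ∈ LinearMap.ker (π : Hdiv →ₗ[ℝ] Hdiv) ⊓ LinearMap.ker (D : Hdiv →ₗ[ℝ] S),
      ⟪Ainv (ι (𝒞 v)), ι w⟫ = ⟪Ainv (ι v), ι w⟫)
    (hDL0 : ∀ v : Hdiv, D v ∈ L0)
    -- inf-sup stability on the multiscale pair (V^ms, Q_H ∩ L²₀)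
    (ρms : ℝ) (hρms : 0 < ρms)
    (hinfsup : ∀ qH ∈ QH ⊓ L0, qH ≠ 0 →
      ∃ v ∈ Submodule.map ((ContinuousLinearMap.id ℝ Hdiv - 𝒞) : Hdiv →ₗ[ℝ] Hdiv)
        (LinearMap.range (π : Hdiv →ₗ[ℝ] Hdiv)), v ≠ 0 ∧ ρms * ‖qH‖ * ‖v‖ ≤ ⟪D v, qH⟫)
    (f : S) (hf : f ∈ L0)
    (u : Hdiv) (p : S) (hp : p ∈ L0)
    (h1 : ∀ v : Hdiv, ⟪Ainv (ι u), ι v⟫ + ⟪D v, p⟫ = 0)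
    (h2 : ∀ q ∈ L0, ⟪D u, q⟫ = -⟪f, q⟫)
    (uPf : Hdiv) (pPf : S) (hpPf : pPf ∈ L0)
    (h1Pf : ∀ v : Hdiv, ⟪Ainv (ι uPf), ι v⟫ + ⟪D v, pPf⟫ = 0)
    (h2Pf : ∀ q ∈ L0, ⟪D uPf, q⟫ = -⟪(Submodule.orthogonalProjectionOnto QH f : S), q⟫)
    (uHms : Hdiv) (pH : S)
    (huHms : uHms ∈ Submodule.map ((ContinuousLinearMap.id ℝ Hdiv - 𝒞) : Hdiv →ₗ[ℝ] Hdiv)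
      (LinearMap.range (π : Hdiv →ₗ[ℝ] Hdiv)))
    (hpH : pH ∈ QH ⊓ L0)
    (hdivV : ∀ v ∈ Submodule.map ((ContinuousLinearMap.id ℝ Hdiv - 𝒞) : Hdiv →ₗ[ℝ] Hdiv)
      (LinearMap.range (π : Hdiv →ₗ[ℝ] Hdiv)), D v ∈ QH)
    (hd1 : ∀ v ∈ Submodule.map ((ContinuousLinearMap.id ℝ Hdiv - 𝒞) : Hdiv →ₗ[ℝ] Hdiv)
      (LinearMap.range (π : Hdiv →ₗ[ℝ] Hdiv)), ⟪Ainv (ι uHms), ι v⟫ + ⟪D v, pH⟫ = 0)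
    (hd2 : ∀ qH ∈ QH, ⟪D uHms, qH⟫ = -⟪f, qH⟫) :
    ‖p - pH‖ ≤ (1 + ρms⁻¹ * (β * C_P + 1)) *
      (Hm * ‖f - (Submodule.orthogonalProjectionOnto QH f : S)‖ +
        ‖p - (Submodule.orthogonalProjectionOnto QH p : S)‖) :=
  ideal_pressure_error_estimate_general ι D hι G j Ainv hAsym α β hα hβ hlow hupp QH L0 hPL0 Hm C_P
    hHm hCP happrox hGradChar π 𝒞 hπproj hcomm h𝒞mem h𝒞eq hDL0 ρms hρms hinfsup f hf u p hp h1 h2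
    uPf pPf hpPf h1Pf h2Pf uHms pH huHms hpH hdivV hd1 hd2
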